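/- The groups Γ_T and Γ_D are not isomorphic as groups. (Consequently the platycosms Tetra = ℝ³/Γ_T and Didi = ℝ³/Γ_D, which have these groups as fundamental groups, are not homeomorphic and in particular not isometric.) -/

import Mathlib

noncomputable section

/-- Points of `ℝ³`, written as `(x, y, z)`. -/
abbrev R3 : Type := ℝ × ℝ × ℝ

/-- The translation `T_w : x ↦ x + w` of `ℝ³`, as a bijection (it is an isometry). -/
def transl (w : R3) : Equiv.Perm R3 := Equiv.addRight w

/-- The quarter-turn screw motion `τ(x,y,z) = (−y, x, z+1/2)`, as a bijection
(it is an isometry). -/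
def tauE : Equiv.Perm R3 where
  toFun p := (-p.2.1, p.1, p.2.2 + 1/2)
  invFun p := (p.2.1, -p.1, p.2.2 - 1/2)
  left_inv p := by obtain ⟨x, y, z⟩ := p; simp
  right_inv p := by obtain ⟨x, y, z⟩ := p; simp

/-- The half-turn screw motion `ρ_x(x,y,z) = (x+1/2, −y, −z)`, as a bijection
(it is an isometry). -/
def rhoxE : Equiv.Perm R3 where
  toFun p := (p.1 + 1/2, -p.2.1, -p.2.2)
  invFun p := (p.1 - 1/2, -p.2.1, -p.2.2)
  left_inv p := by obtain ⟨x, y, z⟩ := p; simp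
  right_inv p := by obtain ⟨x, y, z⟩ := p; simp

/-- The half-turn screw motion `ρ_y(x,y,z) = (−x, y+1/2, 1−z)`, as a bijection
(it is an isometry). -/
def rhoyE : Equiv.Perm R3 where
  toFun p := (-p.1, p.2.1 + 1/2, 1 - p.2.2)
  invFun p := (-p.1, p.2.1 - 1/2, 1 - p.2.2)
  left_inv p := by obtain ⟨x, y, z⟩ := p; simp
  right_inv p := by obtain ⟨x, y, z⟩ := p; simp

/-- `Γ_T`, the covering group of the tetracosm Tetra: the group generated by the
translations `T_{(1,0,0)}, T_{(0,1,0)}, T_{(0,0,2)}` and `τ`. -/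
def GammaT : Subgroup (Equiv.Perm R3) :=
  Subgroup.closure {transl (1, 0, 0), transl (0, 1, 0), transl (0, 0, 2), tauE}

/-- `Γ_D`, the covering group of the didicosm Didi: the group generated by the
translations `T_{(1,0,0)}, T_{(0,1,0)}, T_{(0,0,2)}` and `ρ_x`, `ρ_y`. -/
def GammaD : Subgroup (Equiv.Perm R3) :=
  Subgroup.closure {transl (1, 0, 0), transl (0, 1, 0), transl (0, 0, 2), rhoxE, rhoyE}

end

/-!
`Γ_T` has a nontrivial center: the vertical translation `T_{(0,0,2)}` commutes with the
translations and with the screw motion `τ`. The center of `Γ_D` is trivial. Every element of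
`Γ_D` has the form `p ↦ e * p + b` with `e` a diagonal sign matrix; commuting with the three
translations forces `e = 1`, and then commuting with `ρ_x` and `ρ_y`, whose linear parts
`diag(1,-1,-1)` and `diag(-1,1,-1)` have no common fixed vector besides `0`, forces `b = 0`.
-/

open Subgroup

theorem Subgroup.center_eq_bot_of_mulEquiv {G H : Type*} [Group G] [Group H] (φ : G ≃* H)
    (h : center H = ⊥) : center G = ⊥ := by
  refine (eq_bot_iff_forall _).2 fun z hz => φ.injective ?_
  have hφz : φ z ∈ center H := MulEquivClass.apply_mem_center φ hz
  rwa [h, mem_bot, ← map_one φ] at hφz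

lemma Subgroup.mem_center_closure_of_forall_commute {G : Type*} [Group G] {s : Set G}
    {z : closure s} (h : ∀ x ∈ s, Commute x (z : G)) : z ∈ center (closure s) := by
  have hle : closure s ≤ centralizer {(z : G)} :=
    closure_le _ |>.2 fun x hx => mem_centralizer_singleton_iff.2 (h x hx).eq
  exact mem_center_iff.2 fun g => Subtype.ext (mem_centralizer_singleton_iff.1 (hle g.2))

lemma transl_commute_transl (v w : R3) : Commute (transl v) (transl w) :=
  Equiv.ext fun p => add_right_comm p w v

lemma tauE_commute_transl_vertical (c : ℝ) : Commute tauE (transl (0, 0, c)) :=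
  Equiv.ext fun p => by ext <;> simp [tauE, transl, add_right_comm]

theorem center_gammaT_ne_bot : center GammaT ≠ ⊥ := by
  intro h
  have hmem : (⟨transl (0, 0, 2), subset_closure (by simp)⟩ : GammaT) ∈ center GammaT := by
    refine mem_center_closure_of_forall_commute ?_
    rintro g (rfl | rfl | rfl | rfl)
    iterate 3 exact transl_commute_transl _ _
    exact tauE_commute_transl_vertical 2
  rw [h, mem_bot] at hmem
  have h0 := DFunLike.congr_fun (congrArg Subtype.val hmem) 0
  simp [transl] at h0

def diagAffine (e b : R3) : R3 → R3 := fun p => e * p + b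

lemma diagAffine_apply (e b p : R3) : diagAffine e b p = e * p + b := rfl

/-- The product of `ℝ × ℝ × ℝ` is coordinatewise, so `e * e = 1` says that each entry of `e` is
`±1`, i.e. `diagAffine e b` has linear part a diagonal sign matrix. -/
def diagSignAffine : Subgroup (Equiv.Perm R3) where
  carrier := {g | ∃ e b : R3, e * e = 1 ∧ ⇑g = diagAffine e b}
  one_mem' := ⟨1, 0, mul_one 1, funext fun p => by simp [diagAffine_apply]⟩
  mul_mem' := by
    rintro g h ⟨e, b, he, hg⟩ ⟨f, c, hf, hh⟩
    refine ⟨e * f, e * c + b, by linear_combination f * f * he + hf, funext fun p => ?_⟩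
    simp only [Equiv.Perm.coe_mul, Function.comp_apply, hg, hh, diagAffine_apply]
    ring
  inv_mem' := by
    rintro g ⟨e, b, he, hg⟩
    refine ⟨e, -(e * b), he, funext fun p => g.injective ?_⟩
    rw [Equiv.Perm.coe_inv, Equiv.apply_symm_apply, hg, diagAffine_apply, diagAffine_apply]
    linear_combination (b - p) * he

lemma coe_transl_eq_diagAffine (w : R3) : ⇑(transl w) = diagAffine 1 w :=
  funext fun p => by simp [transl, diagAffine_apply]

lemma coe_rhoxE_eq_diagAffine : ⇑rhoxE = diagAffine (1, -1, -1) (1/2, 0, 0) :=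
  funext fun p => by ext <;> simp [rhoxE, diagAffine_apply]

lemma coe_rhoyE_eq_diagAffine : ⇑rhoyE = diagAffine (-1, 1, -1) (0, 1/2, 1) :=
  funext fun p => by ext <;> simp [rhoyE, diagAffine_apply, sub_eq_neg_add]

lemma gammaD_le_diagSignAffine : GammaD ≤ diagSignAffine := by
  rw [GammaD, closure_le]
  rintro g (rfl | rfl | rfl | rfl | rfl)
  iterate 3 exact ⟨1, _, mul_one 1, coe_transl_eq_diagAffine _⟩
  · exact ⟨_, _, by norm_num [Prod.ext_iff], coe_rhoxE_eq_diagAffine⟩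
  · exact ⟨_, _, by norm_num [Prod.ext_iff], coe_rhoyE_eq_diagAffine⟩

lemma Commute.mul_add_eq_mul_add_of_diagAffine {g h : Equiv.Perm R3} {e b f c : R3} (hg : ⇑g = diagAffine e b)
    (hh : ⇑h = diagAffine f c) (hgh : Commute g h) : e * c + b = f * b + c := by
  have h0 := DFunLike.congr_fun hgh.eq 0
  simpa [hg, hh, diagAffine_apply] using h0

theorem center_gammaD_eq_bot : center GammaD = ⊥ := by
  refine (eq_bot_iff_forall _).2 fun z hz => Subtype.ext ?_
  have hcomm : ∀ x, x ∈ ({transl (1, 0, 0), transl (0, 1, 0), transl (0, 0, 2), rhoxE, rhoyE} :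
      Set (Equiv.Perm R3)) → Commute (z : Equiv.Perm R3) x := fun x hx =>
    (congrArg Subtype.val (mem_center_iff.mp hz ⟨x, subset_closure hx⟩)).symm
  obtain ⟨e, b, -, hze⟩ := gammaD_le_diagSignAffine z.2
  have h₁ := (hcomm _ (by simp)).mul_add_eq_mul_add_of_diagAffine hze (coe_transl_eq_diagAffine (1, 0, 0))
  have h₂ := (hcomm _ (by simp)).mul_add_eq_mul_add_of_diagAffine hze (coe_transl_eq_diagAffine (0, 1, 0))
  have h₃ := (hcomm _ (by simp)).mul_add_eq_mul_add_of_diagAffine hze (coe_transl_eq_diagAffine (0, 0, 2))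
  have he : e = 1 := by
    simp only [Prod.ext_iff, Prod.fst_add, Prod.snd_add, Prod.fst_mul, Prod.snd_mul, Prod.fst_one,
      Prod.snd_one, one_mul, mul_one, mul_zero, zero_add, add_zero, and_self, and_true, true_and]
      at h₁ h₂ h₃ ⊢
    exact ⟨by linarith, by linarith, by linarith⟩
  subst he
  have hx := (hcomm _ (by simp)).mul_add_eq_mul_add_of_diagAffine hze coe_rhoxE_eq_diagAffine
  have hy := (hcomm _ (by simp)).mul_add_eq_mul_add_of_diagAffine hze coe_rhoyE_eq_diagAffine
  have hb : b = 0 := by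
    simp only [Prod.ext_iff, Prod.fst_add, Prod.snd_add, Prod.fst_mul, Prod.snd_mul, Prod.fst_zero,
      Prod.snd_zero, one_mul, neg_mul, zero_add, add_zero] at hx hy ⊢
    exact ⟨by linarith [hy.1], by linarith [hx.2.1], by linarith [hx.2.2]⟩
  refine Equiv.ext fun p => ?_
  simp [hze, hb, diagAffine_apply]

/-- the groups `Γ_T` and `Γ_D` are not isomorphic (hence Tetra and Didi
are not homeomorphic, in particular not isometric). -/
theorem gammaT_not_iso_gammaD : IsEmpty (↥GammaT ≃* ↥GammaD) :=
  ⟨fun φ => center_gammaT_ne_bot (center_eq_bot_of_mulEquiv φ center_gammaD_eq_bot)⟩
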